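/- arXiv:1306.5403 — 6 statements merged into one kernel-verified Lean document; each statement's English description precedes it below -/
import Mathlib

section
/- Let F be a field and A, B, C be 2×2 matrices over F with B singular (i.e., det B = 0). If A*B*C = 0, then A*B = 0 or B*C = 0. -/
open Matrix

private lemma rank1_decomp {F : Type*} [Field F] (B : Matrix (Fin 2) (Fin 2) F)
    (hB : B.det = 0) : ∃ u v : Fin 2 → F, ∀ i j, B i j = u i * v j := by
  rw [Matrix.det_fin_two] at hB
  by_cases ha : B 0 0 = 0
  · by_cases hc : B 1 0 = 0
    · refine ⟨![B 0 1, B 1 1], ![0, 1], ?_⟩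
      intro i j
      fin_cases i <;> fin_cases j <;> simp [ha, hc]
    · refine ⟨![B 0 0, B 1 0], ![1, B 1 1 / B 1 0], ?_⟩
      intro i j
      fin_cases i <;> fin_cases j <;> simp only [Fin.zero_eta, Fin.mk_one, Matrix.cons_val_zero, Matrix.cons_val_one, Matrix.head_cons] <;> field_simp <;> first | linear_combination hB | linear_combination -hB
  · refine ⟨![B 0 0, B 1 0], ![1, B 0 1 / B 0 0], ?_⟩
    intro i j
    fin_cases i <;> fin_cases j <;> simp only [Fin.zero_eta, Fin.mk_one, Matrix.cons_val_zero, Matrix.cons_val_one, Matrix.head_cons] <;> field_simp <;> first | linear_combination hB | linear_combination -hB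

theorem stmt_0 {F : Type*} [Field F] (A B C : Matrix (Fin 2) (Fin 2) F)
    (hB : B.det = 0) (h : A * B * C = 0) : A * B = 0 ∨ B * C = 0 := by
  obtain ⟨u, v, huv⟩ := rank1_decomp B hB
  set u' : Fin 2 → F := fun i => ∑ k, A i k * u k with hu'
  set v' : Fin 2 → F := fun j => ∑ l, v l * C l j with hv'
  have hAB : ∀ i j, (A * B) i j = u' i * v j := by
    intro i j
    simp only [Matrix.mul_apply, hu', Finset.sum_mul]
    exact Finset.sum_congr rfl fun k _ => by rw [huv, mul_assoc]
  have hBC : ∀ i j, (B * C) i j = u i * v' j := by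
    intro i j
    simp only [Matrix.mul_apply, hv', Finset.mul_sum]
    exact Finset.sum_congr rfl fun k _ => by rw [huv, mul_assoc]
  have hABC : ∀ i j, u' i * v' j = 0 := by
    intro i j
    have := congrFun (congrFun h i) j
    simp only [Matrix.mul_apply, Matrix.zero_apply] at this
    calc u' i * v' j = ∑ l, (A * B) i l * C l j := by
          simp only [hv', Finset.mul_sum]
          exact Finset.sum_congr rfl fun l _ => by rw [hAB, mul_assoc]
      _ = 0 := this
  by_cases hu0 : ∀ i, u' i = 0
  · left; ext i j; rw [hAB, hu0, zero_mul]; rfl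
  · right
    push_neg at hu0
    obtain ⟨i, hi⟩ := hu0
    have hv0 : ∀ j, v' j = 0 := fun j => by
      have := hABC i j
      exact (mul_eq_zero.1 this).resolve_left hi
    ext a b; rw [hBC, hv0, mul_zero]; rfl
end

section
/- Let F be a field and A, B be 2×2 matrices over F with B invertible and A singular. If some product formed from A and B (a nonempty word in A and B) equals the zero matrix, then there exists m ≥ 0 with A * B^m * A = 0. -/
open Matrix
lemma key {F : Type*} [Field F] (A : Matrix (Fin 2) (Fin 2) F) (hA : A.det = 0)
    (M : Matrix (Fin 2) (Fin 2) F) : A * M * A = (M * A).trace • A := by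
  have h : A 0 0 * A 1 1 = A 0 1 * A 1 0 := by
    rw [Matrix.det_fin_two] at hA; linear_combination hA
  ext i j
  fin_cases i <;> fin_cases j <;>
    simp [Matrix.mul_apply, Matrix.trace, Matrix.diag, Fin.sum_univ_two] <;>
    first
      | linear_combination (-(M 1 1)) * h
      | linear_combination (M 0 1) * h
      | linear_combination (M 1 0) * h
      | linear_combination (-(M 0 0)) * h

theorem stmt_3 {F : Type*} [Field F] (A B : Matrix (Fin 2) (Fin 2) F)
    (hB : IsUnit B) (hA : A.det = 0)
    (h : ∃ L : List (Matrix (Fin 2) (Fin 2) F),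
      L ≠ [] ∧ (∀ M ∈ L, M = A ∨ M = B) ∧ L.prod = 0) :
    ∃ m : ℕ, A * B ^ m * A = 0 := by
  by_cases hA0 : A = 0
  · exact ⟨0, by simp [hA0]⟩
  by_contra hc
  push_neg at hc
  obtain ⟨L, -, hmem, hprod⟩ := h
  have inv : ∀ L : List (Matrix (Fin 2) (Fin 2) F), (∀ M ∈ L, M = A ∨ M = B) →
      (∃ k, L.prod = B ^ k) ∨
      (∃ (c : F) (i j : ℕ), c ≠ 0 ∧ L.prod = c • (B ^ i * A * B ^ j)) := by
    intro L
    induction L with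
    | nil => intro _; exact Or.inl ⟨0, by simp⟩
    | cons M t ih =>
      intro hm
      obtain hrec | hrec := ih (fun x hx => hm x (List.mem_cons_of_mem _ hx)) <;>
        obtain hM | hM := hm M List.mem_cons_self
      · obtain ⟨k, hk⟩ := hrec
        exact Or.inr ⟨1, 0, k, one_ne_zero, by
          rw [List.prod_cons, hk, hM, one_smul, pow_zero, one_mul]⟩
      · obtain ⟨k, hk⟩ := hrec
        exact Or.inl ⟨k + 1, by rw [List.prod_cons, hk, hM, pow_succ']⟩
      · obtain ⟨c, i, j, hc0, hcij⟩ := hrec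
        refine Or.inr ⟨c * (B ^ i * A).trace, 0, j, ?_, ?_⟩
        · refine mul_ne_zero hc0 fun h0 => hc i ?_
          rw [key A hA (B ^ i), h0, zero_smul]
        · rw [List.prod_cons, hcij, hM, Matrix.mul_smul]
          rw [show A * (B ^ i * A * B ^ j) = (A * B ^ i * A) * B ^ j by
            noncomm_ring]
          rw [key A hA (B ^ i), pow_zero, one_mul, Matrix.smul_mul, smul_smul]
      · obtain ⟨c, i, j, hc0, hcij⟩ := hrec
        refine Or.inr ⟨c, i + 1, j, hc0, ?_⟩
        rw [List.prod_cons, hcij, hM, Matrix.mul_smul, pow_succ']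
        noncomm_ring
  obtain ⟨k, hk⟩ | ⟨c, i, j, hc0, hcij⟩ := inv L hmem
  · exact (hB.pow k).ne_zero (hk ▸ hprod)
  · rw [hcij] at hprod
    rcases smul_eq_zero.mp hprod with h1 | h2
    · exact hc0 h1
    · apply hA0
      obtain ⟨u, hu⟩ := hB.pow i
      obtain ⟨v, hv⟩ := hB.pow j
      rw [← hu, ← hv] at h2
      have hAe : A = (↑u⁻¹ : Matrix (Fin 2) (Fin 2) F) *
          ((u : Matrix (Fin 2) (Fin 2) F) * A * (v : Matrix (Fin 2) (Fin 2) F)) *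
          (↑v⁻¹ : Matrix (Fin 2) (Fin 2) F) := by
        rw [mul_assoc (u : Matrix (Fin 2) (Fin 2) F) A,
          ← mul_assoc (↑u⁻¹ : Matrix (Fin 2) (Fin 2) F),
          Units.inv_mul, one_mul, mul_assoc, Units.mul_inv, mul_one]
      rw [hAe, h2, mul_zero, zero_mul]
end

section
/- For every natural number N there exists a prime p and 2×2 matrices A, B over ZMod p such that some product (nonempty word) in A and B equals the zero matrix, but no product in A and B of length at most N equals the zero matrix. -/
open Matrix

section aux

variable (p : ℕ) [Fact p.Prime]

lemma Bpow : ∀ k : ℕ, (!![1,0;1,1] : Matrix (Fin 2) (Fin 2) (ZMod p))^k = !![1,0;(k:ZMod p),1] := by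
  intro k
  induction k with
  | zero => simp [Matrix.one_fin_two]
  | succ n ih =>
      rw [pow_succ, ih, Matrix.mul_fin_two]
      push_cast
      congr 1 <;> ring

lemma key_s6 (N : ℕ) (hpN : N + 2 ≤ p) :
    ∀ L : List (Matrix (Fin 2) (Fin 2) (ZMod p)),
      (∀ M ∈ L, M = !![1,1;0,0] ∨ M = !![1,0;1,1]) → L.length ≤ N →
      L.prod = !![1,0;(L.length:ZMod p),1] ∨
      ∃ a b : ℕ, a + b + 1 ≤ L.length ∧ ∃ c : ZMod p, c ≠ 0 ∧
        L.prod = !![c*(1+b), c; c*(a*(1+b)), c*a] := by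
  intro L
  induction L with
  | nil => intro _ _; left; simp [Matrix.one_fin_two]
  | cons x T ih =>
      intro hmem hlen
      have hT : T.length ≤ N := by simpa using Nat.le_of_succ_le hlen
      have hmemT : ∀ M ∈ T, M = !![1,1;0,0] ∨ M = !![1,0;1,1] := fun M hM =>
        hmem M (List.mem_cons_of_mem _ hM)
      have hcast : ∀ m : ℕ, m + 1 ≤ N → (1 + (m : ZMod p)) ≠ 0 := by
        intro m hm h0
        have : ((m + 1 : ℕ) : ZMod p) = 0 := by push_cast; linear_combination h0
        rw [ZMod.natCast_eq_zero_iff] at this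
        have := Nat.le_of_dvd (Nat.succ_pos m) this
        omega
      rcases ih hmemT hT with h | ⟨a, b, hab, c, hc, h⟩
      · rcases hmem x List.mem_cons_self with rfl | rfl
        · right
          refine ⟨0, T.length, by simp, 1, one_ne_zero, ?_⟩
          rw [List.prod_cons, h, Matrix.mul_fin_two]
          congr 1 <;> ring
        · left
          rw [List.prod_cons, h, Matrix.mul_fin_two]
          simp only [List.length_cons]
          push_cast
          congr 1 <;> ring
      · rcases hmem x List.mem_cons_self with rfl | rfl
        · right
          have ha1 : (1 + (a : ZMod p)) ≠ 0 := hcast a (by omega)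
          refine ⟨0, b, by simp; omega, c * (1 + a), mul_ne_zero hc ha1, ?_⟩
          rw [List.prod_cons, h, Matrix.mul_fin_two]
          congr 1 <;> ring
        · right
          refine ⟨a + 1, b, by simp; omega, c, hc, ?_⟩
          rw [List.prod_cons, h, Matrix.mul_fin_two]
          push_cast
          congr 1 <;> ring

end aux

theorem stmt_6 (N : ℕ) :
    ∃ (p : ℕ), p.Prime ∧ ∃ A B : Matrix (Fin 2) (Fin 2) (ZMod p),
      (∃ L : List (Matrix (Fin 2) (Fin 2) (ZMod p)),
        L ≠ [] ∧ (∀ M ∈ L, M = A ∨ M = B) ∧ L.prod = 0) ∧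
      ∀ L : List (Matrix (Fin 2) (Fin 2) (ZMod p)),
        L ≠ [] → (∀ M ∈ L, M = A ∨ M = B) → L.length ≤ N → L.prod ≠ 0 := by
  obtain ⟨p, hpN, hp⟩ := Nat.exists_infinite_primes (N + 2)
  haveI : Fact p.Prime := ⟨hp⟩
  refine ⟨p, hp, !![1,1;0,0], !![1,0;1,1], ⟨?_, ?_⟩⟩
  · -- zero word
    refine ⟨!![1,1;0,0] :: (List.replicate (p-1) !![1,0;1,1] ++ [!![1,1;0,0]]), by simp, ?_, ?_⟩
    · intro M hM
      simp only [List.mem_cons, List.mem_append, List.mem_replicate, List.mem_singleton] at hM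
      tauto
    · rw [List.prod_cons, List.prod_append, List.prod_replicate, List.prod_singleton, Bpow]
      have hp1 : ((p - 1 : ℕ) : ZMod p) = -1 := by
        have : p - 1 + 1 = p := Nat.succ_pred_eq_of_pos hp.pos
        have h2 : (((p - 1) + 1 : ℕ) : ZMod p) = 0 := by rw [this]; exact ZMod.natCast_self p
        push_cast at h2
        linear_combination h2
      rw [hp1, Matrix.mul_fin_two, Matrix.mul_fin_two]
      norm_num
      ext i j; fin_cases i <;> fin_cases j <;> simp
  · intro L hne hmem hlen
    rcases key_s6 p N hpN L hmem hlen with h | ⟨a, b, _, c, hc, h⟩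
    · intro h0
      rw [h0] at h
      have := congrFun (congrFun h 0) 0
      simp at this
    · intro h0
      rw [h0] at h
      have := congrFun (congrFun h 0) 1
      simp at this
      exact hc this.symm
end

section
/- For every natural number N and every n ≥ 2, there exists a prime p and n×n matrices A, B over ZMod p such that some product in A and B equals the zero matrix, but no product in A and B of length at most N equals the zero matrix. -/
theorem stmt_7 (N n : ℕ) (hn : 2 ≤ n) :
    ∃ (p : ℕ), p.Prime ∧ ∃ A B : Matrix (Fin n) (Fin n) (ZMod p),
      (∃ L : List (Matrix (Fin n) (Fin n) (ZMod p)),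
        L ≠ [] ∧ (∀ M ∈ L, M = A ∨ M = B) ∧ L.prod = 0) ∧
      ∀ L : List (Matrix (Fin n) (Fin n) (ZMod p)),
        L ≠ [] → (∀ M ∈ L, M = A ∨ M = B) → L.length ≤ N → L.prod ≠ 0 := by
  obtain ⟨p, hpN, hp⟩ := Nat.exists_infinite_primes (N + 1)
  haveI : Fact p.Prime := ⟨hp⟩
  haveI : NeZero n := ⟨by omega⟩
  have hp2 : 2 ≤ p := hp.two_le
  set i0 : Fin n := ⟨0, by omega⟩ with hi0
  set i1 : Fin n := ⟨1, by omega⟩ with hi1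
  have h01 : i0 ≠ i1 := by simp [hi0, hi1, Fin.ext_iff]
  set E : Matrix (Fin n) (Fin n) (ZMod p) := Matrix.single i0 i1 1 with hE
  set F : Matrix (Fin n) (Fin n) (ZMod p) := Matrix.single i1 i0 1 with hF
  set G : Matrix (Fin n) (Fin n) (ZMod p) := Matrix.single i1 i1 1 with hG
  set A : Matrix (Fin n) (Fin n) (ZMod p) := 1 + E with hA
  -- key std basis products
  have hEE : E * E = 0 := by
    rw [hE]; exact Matrix.single_mul_single_of_ne 1 _ _ _ h01.symm 1
  have hFE : F * E = G := by
    rw [hF, hE, hG, Matrix.single_mul_single_same, one_mul]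
  have hGE : G * E = 0 := by
    rw [hG, hE]; exact Matrix.single_mul_single_of_ne 1 _ _ _ h01.symm 1
  have hFF : F * F = 0 := by
    rw [hF]; exact Matrix.single_mul_single_of_ne 1 _ _ _ h01 1
  have hFG : F * G = 0 := by
    rw [hF, hG]; exact Matrix.single_mul_single_of_ne 1 _ _ _ h01 1
  have hGF : G * F = F := by
    rw [hG, hF, Matrix.single_mul_single_same, one_mul]
  have hGG : G * G = G := by
    rw [hG, Matrix.single_mul_single_same, one_mul]
  -- W t = F + t • G
  set W : ℕ → Matrix (Fin n) (Fin n) (ZMod p) := fun t => F + (t : ZMod p) • G with hW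
  set B : Matrix (Fin n) (Fin n) (ZMod p) := W 1 with hB
  -- transitions
  have hWA : ∀ t : ℕ, W t * A = W (t + 1) := by
    intro t
    show (F + (t : ZMod p) • G) * (1 + E) = F + ((t + 1 : ℕ) : ZMod p) • G
    rw [mul_add, mul_one, add_mul, smul_mul_assoc, hFE, hGE, smul_zero, add_zero]
    push_cast
    module
  have hWB : ∀ t : ℕ, W t * B = (t : ZMod p) • W 1 := by
    intro t
    show (F + (t : ZMod p) • G) * (F + ((1:ℕ) : ZMod p) • G)
        = (t : ZMod p) • (F + ((1:ℕ) : ZMod p) • G)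
    rw [Nat.cast_one, one_smul, mul_add, add_mul, add_mul, smul_mul_assoc, smul_mul_assoc,
      hFF, hFG, hGF, hGG]
    module
  -- A is a unit
  have hAinv : A * (1 - E) = 1 := by
    rw [hA, add_mul, mul_sub, mul_sub, mul_one, one_mul, mul_one, hEE]
    abel
  have hAinv' : (1 - E) * A = 1 := by
    rw [hA, sub_mul, mul_add, mul_add, mul_one, one_mul, mul_one, hEE]
    abel
  have hAu : IsUnit A := ⟨⟨A, 1 - E, hAinv, hAinv'⟩, rfl⟩
  -- W t ≠ 0
  have hWapp : ∀ t : ℕ, W t i1 i0 = 1 := by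
    intro t
    show (F + (t : ZMod p) • G) i1 i0 = 1
    rw [Matrix.add_apply, Matrix.smul_apply, hF, hG, Matrix.single_apply_same,
      Matrix.single_apply_of_ne]
    · simp
    · rintro ⟨-, h⟩
      exact h01 h.symm
  have hWne : ∀ t : ℕ, W t ≠ 0 := by
    intro t h
    have h2 := hWapp t
    rw [h] at h2
    simp at h2
  have hApowWne : ∀ (a t : ℕ), A ^ a * W t ≠ 0 := by
    intro a t h
    exact hWne t (((hAu.pow a).mul_right_eq_zero).1 h)
  -- cast nonzero
  have hcast : ∀ t : ℕ, 1 ≤ t → t < p → (t : ZMod p) ≠ 0 := by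
    intro t h1 h2 h
    rw [ZMod.natCast_eq_zero_iff] at h
    have := Nat.le_of_dvd (by omega) h
    omega
  -- main invariant
  have key : ∀ L : List (Matrix (Fin n) (Fin n) (ZMod p)), L ≠ [] →
      (∀ M ∈ L, M = A ∨ M = B) →
      (∃ a : ℕ, L.prod = A ^ a) ∨
      (∃ (a t : ℕ) (c : ZMod p), L.prod = c • (A ^ a * W t) ∧ 1 ≤ t ∧ t ≤ L.length ∧
        (L.length < p → c ≠ 0)) := by
    intro L
    induction L using List.reverseRecOn with
    | nil => intro h; exact absurd rfl h
    | append_singleton L x ih =>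
      intro _ hmem
      have hx : x = A ∨ x = B := hmem x (by simp)
      rcases eq_or_ne L [] with rfl | hLne
      · simp only [List.nil_append, List.prod_singleton, List.length_singleton]
        rcases hx with rfl | rfl
        · exact Or.inl ⟨1, (pow_one A).symm⟩
        · refine Or.inr ⟨0, 1, 1, ?_, le_refl 1, le_refl 1, fun _ => one_ne_zero⟩
          rw [pow_zero, one_mul, one_smul, hB]
      · have hmem' : ∀ M ∈ L, M = A ∨ M = B := fun M hM => hmem M (by simp [hM])
        have hlen : (L ++ [x]).length = L.length + 1 := by
          rw [List.length_append, List.length_singleton]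
        rcases ih hLne hmem' with ⟨a, ha⟩ | ⟨a, t, c, hc, ht1, htl, hcne⟩
        · rw [List.prod_append, List.prod_singleton, ha]
          rcases hx with rfl | rfl
          · exact Or.inl ⟨a + 1, by rw [pow_succ]⟩
          · refine Or.inr ⟨a, 1, 1, ?_, le_refl 1, by rw [hlen]; omega,
              fun _ => one_ne_zero⟩
            rw [one_smul, hB]
        · rw [List.prod_append, List.prod_singleton, hc]
          rcases hx with rfl | rfl
          · refine Or.inr ⟨a, t + 1, c, ?_, by omega, by rw [hlen]; omega,
              fun h => hcne (by rw [hlen] at h; omega)⟩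
            rw [smul_mul_assoc, mul_assoc, hWA]
          · refine Or.inr ⟨a, 1, c * (t : ZMod p), ?_, le_refl 1, by rw [hlen]; omega, ?_⟩
            · rw [smul_mul_assoc, mul_assoc, hWB, mul_smul_comm, smul_smul]
            · intro h hz
              rw [hlen] at h
              rcases mul_eq_zero.1 hz with h' | h'
              · exact hcne (by omega) h'
              · exact hcast t ht1 (by omega) h'
  refine ⟨p, hp, A, B, ?_, ?_⟩
  · -- existence of a zero word
    have hApow : ∀ t k : ℕ, W t * A ^ k = W (t + k) := by
      intro t k
      induction k with
      | zero => rw [pow_zero, mul_one, Nat.add_zero]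
      | succ k ihk => rw [pow_succ, ← mul_assoc, ihk, hWA, Nat.add_assoc]
    refine ⟨B :: (List.replicate (p - 1) A ++ [B]), by simp, ?_, ?_⟩
    · intro M hM
      rcases List.mem_cons.1 hM with rfl | hM
      · exact Or.inr rfl
      rcases List.mem_append.1 hM with hM | hM
      · exact Or.inl (List.eq_of_mem_replicate hM)
      · rw [List.mem_singleton] at hM
        exact Or.inr hM
    · rw [List.prod_cons, List.prod_append, List.prod_replicate, List.prod_singleton,
        ← mul_assoc]
      rw [hB, hApow, hWB]
      have hz : ((1 + (p - 1) : ℕ) : ZMod p) = 0 := by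
        rw [show 1 + (p - 1) = p from by omega, ZMod.natCast_self]
      rw [hz, zero_smul]
  · -- no short zero word
    intro L hLne hmem hlen
    rcases key L hLne hmem with ⟨a, ha⟩ | ⟨a, t, c, hc, _, _, hcne⟩
    · rw [ha]
      exact (hAu.pow a).ne_zero
    · rw [hc]
      exact smul_ne_zero (hcne (by omega)) (hApowWne a t)
end

section
/- Let F be a field and A, B, C be 2×2 matrices over F such that B = (v, β•v) for some vector v and scalar β (columns proportional), and the characteristic polynomial shows C is conjugate to [[1,0],[0,0]] or [[0,1],[0,0]]. If A*B*C = 0, then A*B = 0. -/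
theorem stmt_11 {F : Type*} [Field F] (A B C : Matrix (Fin 2) (Fin 2) F)
    (hB : ∃ (v : Fin 2 → F) (β : F), (∀ i, B i 0 = v i) ∧ (∀ i, B i 1 = β * v i))
    (hC : C = !![1, 0; 0, 0] ∨ C = !![0, 1; 0, 0])
    (h : A * B * C = 0) : A * B = 0 := by
  obtain ⟨v, β, h0, h1⟩ := hB
  have key : ∀ i, (A * B) i 1 = β * (A * B) i 0 := by
    intro i
    simp only [Matrix.mul_apply, h0, h1, Finset.mul_sum]
    apply Finset.sum_congr rfl
    intro k _
    ring
  have hz : ∀ i, (A * B) i 0 = 0 := by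
    intro i
    rcases hC with rfl | rfl
    · have := congrFun (congrFun h i) 0
      simpa [Matrix.mul_apply, Fin.sum_univ_two] using this
    · have := congrFun (congrFun h i) 1
      simpa [Matrix.mul_apply, Fin.sum_univ_two] using this
  ext i j
  fin_cases j
  · simpa using hz i
  · simp [key i, hz i]
end

section
/- Let p be a prime, A = [[1,0],[0,0]] and B = [[1,1],[1,0]] over ZMod p. If k is the least positive integer with p dividing Fib (k+1), then A * B^k * A = 0 over ZMod p, and A * B^m * A ≠ 0 for all 0 ≤ m < k. -/
lemma fibpow (R : Type*) [CommRing R] (n : ℕ) :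
    (!![1, 1; 1, 0] : Matrix (Fin 2) (Fin 2) R) ^ (n + 1) =
      !![(Nat.fib (n + 2) : R), Nat.fib (n + 1); Nat.fib (n + 1), Nat.fib n] := by
  induction n with
  | zero => simp [pow_one]
  | succ m ih =>
    rw [pow_succ, ih]
    ext i j
    fin_cases i <;> fin_cases j <;>
      simp [Matrix.mul_apply, Fin.sum_univ_succ, Nat.fib_add_two] <;> ring

lemma sandwich (R : Type*) [CommRing R] (n : ℕ) :
    (!![1, 0; 0, 0] : Matrix (Fin 2) (Fin 2) R) * !![1, 1; 1, 0] ^ n * !![1, 0; 0, 0] =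
      !![(Nat.fib (n + 1) : R), 0; 0, 0] := by
  cases n with
  | zero => ext i j; fin_cases i <;> fin_cases j <;> simp
  | succ m =>
    rw [fibpow]
    ext i j
    fin_cases i <;> fin_cases j <;>
      simp [Matrix.mul_apply, Fin.sum_univ_succ]

theorem stmt_13 (p : ℕ) (hp : p.Prime) (k : ℕ) (hk : 0 < k)
    (hdvd : p ∣ Nat.fib (k + 1))
    (hmin : ∀ j : ℕ, 0 < j → p ∣ Nat.fib (j + 1) → k ≤ j) :
    (!![1, 0; 0, 0] : Matrix (Fin 2) (Fin 2) (ZMod p)) * !![1, 1; 1, 0] ^ k *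
        !![1, 0; 0, 0] = 0 ∧
    ∀ m : ℕ, m < k →
      (!![1, 0; 0, 0] : Matrix (Fin 2) (Fin 2) (ZMod p)) * !![1, 1; 1, 0] ^ m *
        !![1, 0; 0, 0] ≠ 0 := by
  haveI : Fact p.Prime := ⟨hp⟩
  constructor
  · rw [sandwich]
    have : ((Nat.fib (k + 1) : ℕ) : ZMod p) = 0 :=
      (ZMod.natCast_eq_zero_iff _ _).mpr hdvd
    rw [this]
    ext i j; fin_cases i <;> fin_cases j <;> simp
  · intro m hm hcontra
    rw [sandwich] at hcontra
    have h00 := congrFun (congrFun hcontra 0) 0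
    simp at h00
    have hd : p ∣ Nat.fib (m + 1) := (ZMod.natCast_eq_zero_iff _ _).mp h00
    rcases Nat.eq_zero_or_pos m with rfl | hm0
    · have : p = 1 := Nat.eq_one_of_dvd_one (by simpa using hd)
      exact hp.one_lt.ne' this
    · exact absurd (hmin m hm0 hd) (by omega)
end
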